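/- Let a, b satisfy either a, b \in (-1,\infty) with ab > 0, or a, b \in \mathbb{C} \setminus \{0\} with b = \overline{a}; let c be a positive real number with c > \mathrm{Re}(a+b) + 1, and let \alpha \in \mathbb{C} with |\alpha| < 1. If |\alpha| \cdot \frac{\Gamma(c)\Gamma(c-a-b-1)}{\Gamma(c-a)\Gamma(c-b)} (ab + c - a - b - 1) \leq 1 (this quantity being a positive real number), then the Taylor coefficients b_n = \frac{\alpha}{2} \frac{(a)_{n-1}(b)_{n-1}}{(c)_{n-1} (n-1)!} of g_1(z) = (\alpha/2)\, z\, F(a,b;c;z) satisfy \sum_{n=1}^{\infty} n |b_n| \leq 1/2; consequently f_1(z) = z + \overline{(\alpha/2)\, z\, F(a,b;c;z)} is uniformly starlike in \mathbb{D}. -/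

import Mathlib

/-!
With `a + b = p` and `a b = r` real, `(a)ₙ (b)ₙ = ∏_{k<n} (k² + p k + r) ≥ 0`, so
`∑ (n+1) |b_{n+1}| = (|α|/2) ∑ (n+1) tₙ` where `tₙ ≥ 0` are the terms of `F(a, b; c; 1)`.
The weights `wₙ = n (c + n - 1) tₙ ≥ 0` satisfy `w_{n+1} - wₙ = (r - (c - p - 1) n) tₙ`, which gives
`∑ (n+1) tₙ ≤ (c - p - 1 + r)/(c - p - 1) · F(a, b; c; 1)`. Gauss's theorem
`F(a, b; c; 1) = Γ(c) Γ(c - a - b) / (Γ(c - a) Γ(c - b))`, obtained by iterating the contiguous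
relation in `c` and comparing the resulting products with `GammaSeq`, turns this bound into `q/2`.
Finally `∑ (n+1) |b_{n+1}| ≤ 1/2` bounds `|g'|` by `1/2` on the disk, hence makes `g`
`1/2`-Lipschitz there, and both quotients in the starlikeness condition become
`(1 + u)/(1 - v)` with `|u|, |v| ≤ 1/2`, whose real part is positive.
-/

open Complex Metric ComplexConjugate

noncomputable section

/-- The Pochhammer symbol `(x)ₙ = x(x+1)⋯(x+n-1)` for `x : ℂ`. -/
def poch (x : ℂ) (n : ℕ) : ℂ := (ascPochhammer ℂ n).eval x

/-- The Gaussian hypergeometric function `F(a,b;c;z) = ∑ (a)ₙ(b)ₙ/((c)ₙ n!) zⁿ`. -/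
def hypF (a b c z : ℂ) : ℂ :=
  ∑' n : ℕ, poch a n * poch b n / (poch c n * (Nat.factorial n : ℂ)) * z ^ n

/-- The analytic condition (due to Kanas–Ponnusamy–Sairam) characterizing uniform
starlikeness used in the paper, taken here as the formal definition of
"`h + conj g` is uniformly starlike in `𝔻`". -/
def UniformlyStarlikeOnDisk (h g : ℂ → ℂ) : Prop :=
  (h 0 + conj (g 0) = 0) ∧
  (∀ z ∈ ball (0:ℂ) 1, ‖deriv g z‖ < ‖deriv h z‖) ∧
  (∀ z ∈ ball (0:ℂ) 1, ∀ ζ ∈ ball (0:ℂ) 1, z ≠ ζ →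
    0 ≤ (((h z + conj (g z)) - (h ζ + conj (g ζ)))
        / ((z - ζ) * deriv h z - conj (z - ζ) * conj (deriv g z))).re) ∧
  (∀ z ∈ ball (0:ℂ) 1, z ≠ 0 →
    0 < ((h z + conj (g z))
        / (z * deriv h z - conj z * conj (deriv g z))).re)

/-- The Taylor coefficient `b_{n+1} = (α/2) (a)ₙ(b)ₙ/((c)ₙ n!)` of
`g₁(z) = (α/2) z F(a,b;c;z)`. -/
def bc1 (a b c α : ℂ) (n : ℕ) : ℂ :=
  α / 2 * (poch a n * poch b n) / (poch c n * (Nat.factorial n : ℂ))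

open Filter Topology Finset

theorem eventually_quadratic_nonneg {ε : ℝ} (hε : 0 < ε) (A B : ℝ) :
    ∀ᶠ n : ℕ in atTop, 0 ≤ ε * (n : ℝ) ^ 2 + A * n + B := by
  filter_upwards [eventually_ge_atTop ⌈(|A| + |B|) / ε⌉₊, eventually_ge_atTop 1] with n hn hn1
  have hn : (|A| + |B|) / ε ≤ n := (Nat.le_ceil _).trans (by exact_mod_cast hn)
  have hn1 : (1 : ℝ) ≤ n := by exact_mod_cast hn1
  rw [div_le_iff₀ hε] at hn
  have h0 : (0 : ℝ) ≤ n := by linarith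
  nlinarith [mul_le_mul_of_nonneg_right hn h0, neg_abs_le A, neg_abs_le B, abs_nonneg B,
    mul_le_mul_of_nonneg_right (neg_abs_le A) h0, mul_le_mul_of_nonneg_left hn1 (abs_nonneg B)]

/-- Raabe-type test: `f n * (n + 1) ^ s` is eventually antitone, so `f n = O(n ^ (-s))`. -/
theorem summable_of_eventually_mul_rpow_le {f : ℕ → ℝ} {s : ℝ} (hs : 1 < s)
    (hf : ∀ n, 0 ≤ f n)
    (h : ∀ᶠ n : ℕ in atTop, f (n + 1) * ((n : ℝ) + 2) ^ s ≤ f n * ((n : ℝ) + 1) ^ s) :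
    Summable f := by
  obtain ⟨N, hN⟩ := eventually_atTop.1 h
  have hanti : ∀ n ≥ N, f n * ((n : ℝ) + 1) ^ s ≤ f N * ((N : ℝ) + 1) ^ s := by
    intro n hn
    induction n, hn using Nat.le_induction with
    | base => exact le_rfl
    | succ n hn ih =>
      push_cast
      calc f (n + 1) * ((n : ℝ) + 1 + 1) ^ s = f (n + 1) * ((n : ℝ) + 2) ^ s := by ring_nf
        _ ≤ _ := (hN n hn).trans ih
  refine summable_of_isBigO_nat (Real.summable_nat_rpow_inv.2 hs) ?_
  refine Asymptotics.IsBigO.of_bound (f N * ((N : ℝ) + 1) ^ s) ?_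
  filter_upwards [eventually_ge_atTop N, eventually_ge_atTop 1] with n hn hn1
  have hpos : (0 : ℝ) < (n : ℝ) ^ s := Real.rpow_pos_of_pos (by exact_mod_cast hn1) s
  rw [Real.norm_of_nonneg (hf n), Real.norm_of_nonneg (inv_nonneg.2 hpos.le), ← div_eq_mul_inv,
    le_div_iff₀ hpos]
  calc f n * (n : ℝ) ^ s ≤ f n * ((n : ℝ) + 1) ^ s := by
        gcongr
        · exact hf n
        · linarith
    _ ≤ _ := hanti n hn

theorem add_one_sub_mul_rpow_le {x σ : ℝ} (hx : 0 ≤ x) (hσ : 1 ≤ σ) :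
    (x + 1 - σ) * (x + 1) ^ σ ≤ (x + 1) * x ^ σ := by
  have hx1 : 0 < x + 1 := by linarith
  have hbern := one_add_mul_self_le_rpow_one_add
    (show (-1 : ℝ) ≤ -(x + 1)⁻¹ from neg_le_neg (inv_le_one_of_one_le₀ (by linarith))) hσ
  rw [show 1 + -(x + 1)⁻¹ = x / (x + 1) by field_simp; ring, Real.div_rpow hx hx1.le,
    le_div_iff₀ (Real.rpow_pos_of_pos hx1 σ)] at hbern
  have h := mul_le_mul_of_nonneg_left hbern hx1.le
  rwa [show (x + 1) * ((1 + σ * -(x + 1)⁻¹) * (x + 1) ^ σ) = (x + 1 - σ) * (x + 1) ^ σ by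
    field_simp; ring] at h

theorem tsum_sub_succ {f : ℕ → ℝ} (hf : Summable f) : ∑' n, (f n - f (n + 1)) = f 0 := by
  rw [hf.tsum_sub ((summable_nat_add_iff 1).2 hf), hf.tsum_eq_zero_add, add_sub_cancel_right]

/-- For `a + b = p` and `a b = r` we have `(k + a)(k + b) = k² + p k + r`, so this is the `n`-th
term `(a)ₙ (b)ₙ / ((c)ₙ n!)` of `F(a, b; c; 1)`. -/
def gaussTerm (p r c : ℝ) (n : ℕ) : ℝ :=
  ∏ k ∈ range n, ((k : ℝ) ^ 2 + p * k + r) / ((c + k) * (k + 1))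

section GaussTerm

variable {p r c : ℝ}

@[simp]
theorem gaussTerm_zero : gaussTerm p r c 0 = 1 := prod_range_zero _

theorem gaussTerm_succ (n : ℕ) :
    gaussTerm p r c (n + 1) =
      gaussTerm p r c n * (((n : ℝ) ^ 2 + p * n + r) / ((c + n) * (n + 1))) :=
  prod_range_succ _ _

theorem gaussTerm_succ_mul (hc : 0 < c) (n : ℕ) :
    gaussTerm p r c (n + 1) * ((c + n) * (n + 1)) =
      gaussTerm p r c n * ((n : ℝ) ^ 2 + p * n + r) := by
  rw [gaussTerm_succ, mul_assoc, div_mul_cancel₀ _ (by positivity)]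

theorem gaussTerm_nonneg (hq : ∀ k : ℕ, 0 ≤ (k : ℝ) ^ 2 + p * k + r) (hc : 0 < c) (n : ℕ) :
    0 ≤ gaussTerm p r c n :=
  prod_nonneg fun k _ => div_nonneg (hq k) (by positivity)

theorem gaussTerm_succ_le_div_mul (hq : ∀ k : ℕ, 0 ≤ (k : ℝ) ^ 2 + p * k + r) (hc : 0 < c)
    {c' : ℝ} (hcc : c ≤ c') (n : ℕ) :
    gaussTerm p r c' (n + 1) ≤ c / c' * gaussTerm p r c (n + 1) := by
  have hc' : 0 < c' := hc.trans_le hcc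
  induction n with
  | zero => exact le_of_eq (by simp [gaussTerm_succ]; field_simp)
  | succ n ih =>
    rw [gaussTerm_succ (c := c') (n + 1), gaussTerm_succ (c := c) (n + 1), ← mul_assoc]
    exact mul_le_mul ih (div_le_div_of_nonneg_left (hq _) (by positivity) (by gcongr))
      (div_nonneg (hq _) (by positivity))
      (mul_nonneg (by positivity) (gaussTerm_nonneg hq hc _))

theorem gaussTerm_add_one_mul (hc : 0 < c) (n : ℕ) :
    gaussTerm p r (c + 1) n * (c + n) = gaussTerm p r c n * c := by
  induction n with
  | zero => simp
  | succ n ih =>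
    have hcn : 0 < c + n := by positivity
    push_cast
    calc gaussTerm p r (c + 1) (n + 1) * (c + (n + 1))
        = gaussTerm p r (c + 1) n * (c + n) *
            (((n : ℝ) ^ 2 + p * n + r) / ((c + n) * (n + 1))) := by
          rw [gaussTerm_succ]; field_simp; ring
      _ = gaussTerm p r c (n + 1) * c := by rw [ih, gaussTerm_succ]; ring

theorem eventually_quadratic_mul_rpow_le {σ : ℝ} (hσ : 1 ≤ σ) (hσc : σ < c - p + 1) :
    ∀ᶠ n : ℕ in atTop, ((n : ℝ) ^ 2 + p * n + r) * ((n : ℝ) + 2) ^ σ ≤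
      (c + n) * (n + 1) * ((n : ℝ) + 1) ^ σ := by
  -- `(c + n)(n + 1)(n + 2 - σ) - (n² + p n + r)(n + 2)` expanded in powers of `n`
  filter_upwards [eventually_quadratic_nonneg (sub_pos.2 hσc) ((c + 1) * (2 - σ) + c - 2 * p - r)
    (c * (2 - σ) - 2 * r), eventually_ge_atTop ⌈-c⌉₊] with n hpoly hcn
  have hcn : 0 ≤ c + n := by linarith [(Nat.le_ceil (-c)).trans (Nat.cast_le.2 hcn)]
  have hn : (0 : ℝ) ≤ n := n.cast_nonneg
  have hpow : 0 ≤ ((n : ℝ) + 2) ^ σ := by positivity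
  have hbern := add_one_sub_mul_rpow_le (show (0 : ℝ) ≤ n + 1 by positivity) hσ
  rw [show (n : ℝ) + 1 + 1 = n + 2 by ring] at hbern
  refine le_of_mul_le_mul_right ?_ (show (0 : ℝ) < n + 2 by positivity)
  calc ((n : ℝ) ^ 2 + p * n + r) * ((n : ℝ) + 2) ^ σ * (n + 2)
      ≤ (c + n) * (n + 1) * (n + 2 - σ) * ((n : ℝ) + 2) ^ σ := by
        rw [mul_right_comm]; exact mul_le_mul_of_nonneg_right (by nlinarith) hpow
    _ ≤ (c + n) * (n + 1) * ((n + 2) * ((n : ℝ) + 1) ^ σ) := by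
        rw [mul_assoc]; gcongr
    _ = _ := by ring

theorem summable_succ_mul_gaussTerm (hq : ∀ k : ℕ, 0 ≤ (k : ℝ) ^ 2 + p * k + r) (hc : 0 < c)
    (hcp : p + 1 < c) : Summable fun n : ℕ => ((n : ℝ) + 1) * gaussTerm p r c n := by
  set s := (c - p + 1) / 2 with hs
  refine summable_of_eventually_mul_rpow_le (s := s) (by linarith)
    (fun n => mul_nonneg (by positivity) (gaussTerm_nonneg hq hc n)) ?_
  filter_upwards [eventually_quadratic_mul_rpow_le (p := p) (r := r) (c := c) (σ := s + 1)
    (by linarith) (by linarith)] with n hn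
  have hn1 : (0 : ℝ) < n + 1 := by positivity
  have hn2 : (0 : ℝ) < n + 2 := by positivity
  have hcn : 0 < (c + n) * (n + 1) := by positivity
  rw [Real.rpow_add_one hn1.ne', Real.rpow_add_one hn2.ne'] at hn
  have ht := gaussTerm_succ_mul (p := p) (r := r) hc n
  have ht0 := gaussTerm_nonneg hq hc n
  push_cast
  refine le_of_mul_le_mul_right ?_ hcn
  calc ((n : ℝ) + 1 + 1) * gaussTerm p r c (n + 1) * ((n : ℝ) + 2) ^ s * ((c + n) * (n + 1))
      = gaussTerm p r c n * (((n : ℝ) ^ 2 + p * n + r) * (((n : ℝ) + 2) ^ s * (n + 2))) := by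
        linear_combination (((n : ℝ) + 2) ^ s * (n + 2)) * ht
    _ ≤ gaussTerm p r c n * ((c + n) * (n + 1) * (((n : ℝ) + 1) ^ s * (n + 1))) := by gcongr
    _ = _ := by ring

theorem summable_gaussTerm (hq : ∀ k : ℕ, 0 ≤ (k : ℝ) ^ 2 + p * k + r) (hc : 0 < c)
    (hcp : p + 1 < c) : Summable (gaussTerm p r c) :=
  (summable_succ_mul_gaussTerm hq hc hcp).of_nonneg_of_le (gaussTerm_nonneg hq hc) fun n =>
    le_mul_of_one_le_left (gaussTerm_nonneg hq hc n) (by simp)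

theorem summable_natCast_mul_gaussTerm (hq : ∀ k : ℕ, 0 ≤ (k : ℝ) ^ 2 + p * k + r)
    (hc : 0 < c) (hcp : p + 1 < c) : Summable fun n : ℕ => (n : ℝ) * gaussTerm p r c n :=
  (summable_succ_mul_gaussTerm hq hc hcp).of_nonneg_of_le
    (fun n => mul_nonneg n.cast_nonneg (gaussTerm_nonneg hq hc n))
    fun n => by gcongr; exacts [gaussTerm_nonneg hq hc n, le_add_of_nonneg_right zero_le_one]

theorem gaussTerm_contiguous (hc : 0 < c) (n : ℕ) :
    c * (c - p) * gaussTerm p r c n = (c ^ 2 - p * c + r) * gaussTerm p r (c + 1) n +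
      c * (n * gaussTerm p r c n - (n + 1) * gaussTerm p r c (n + 1)) := by
  have hcn : c + n ≠ 0 := by positivity
  apply mul_right_cancel₀ hcn
  linear_combination (-(c ^ 2 - p * c + r)) * gaussTerm_add_one_mul (p := p) (r := r) hc n +
    c * gaussTerm_succ_mul (p := p) (r := r) hc n

/-- Gauss's contiguous relation `c (c - a - b) F(c) = (c - a)(c - b) F(c + 1)` at `z = 1`. -/
theorem tsum_gaussTerm_contiguous (hq : ∀ k : ℕ, 0 ≤ (k : ℝ) ^ 2 + p * k + r) (hc : 0 < c)
    (hcp : p + 1 < c) :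
    c * (c - p) * ∑' n, gaussTerm p r c n =
      (c ^ 2 - p * c + r) * ∑' n, gaussTerm p r (c + 1) n := by
  have hmul := summable_natCast_mul_gaussTerm hq hc hcp
  have hsum := ((summable_gaussTerm hq (c := c + 1) (by linarith) (by linarith)).hasSum.mul_left
    (c ^ 2 - p * c + r)).add
    ((hmul.sub ((summable_nat_add_iff 1).2 hmul)).hasSum.mul_left c)
  rw [tsum_sub_succ hmul] at hsum
  push_cast at hsum
  rw [← tsum_mul_left, tsum_congr (gaussTerm_contiguous hc), hsum.tsum_eq]
  simp

theorem tsum_gaussTerm_eq_prod_mul (hq : ∀ k : ℕ, 0 ≤ (k : ℝ) ^ 2 + p * k + r) (hc : 0 < c)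
    (hcp : p + 1 < c) (m : ℕ) :
    ∑' n, gaussTerm p r c n =
      (∏ k ∈ range m, ((c + k) ^ 2 - p * (c + k) + r) / ((c + k) * (c + k - p))) *
        ∑' n, gaussTerm p r (c + m) n := by
  induction m with
  | zero => simp
  | succ m ih =>
    have hcm : 0 < c + m := by positivity
    have hcmp : 0 < c + m - p := by linarith [m.cast_nonneg (α := ℝ)]
    have hrel := tsum_gaussTerm_contiguous hq hcm (by linarith [m.cast_nonneg (α := ℝ)])
    rw [ih, prod_range_succ, Nat.cast_succ, ← add_assoc, mul_assoc]
    congr 1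
    rw [div_mul_eq_mul_div, eq_div_iff (by positivity), ← hrel]
    ring

theorem tendsto_tsum_gaussTerm_add_nat (hq : ∀ k : ℕ, 0 ≤ (k : ℝ) ^ 2 + p * k + r) (hc : 0 < c)
    (hcp : p + 1 < c) :
    Tendsto (fun m : ℕ => ∑' n, gaussTerm p r (c + m) n) atTop (𝓝 1) := by
  have hcm (m : ℕ) : c ≤ c + m := le_add_of_nonneg_right m.cast_nonneg
  have hsum (m : ℕ) : Summable fun n => gaussTerm p r (c + m) (n + 1) :=
    (summable_nat_add_iff 1).2 <| summable_gaussTerm hq (hc.trans_le (hcm m))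
      (hcp.trans_le (hcm m))
  have htsum (m : ℕ) :
      ∑' n, gaussTerm p r (c + m) n = 1 + ∑' n, gaussTerm p r (c + m) (n + 1) := by
    rw [(summable_gaussTerm hq (hc.trans_le (hcm m)) (hcp.trans_le (hcm m))).tsum_eq_zero_add,
      gaussTerm_zero]
  set M := ∑' n, gaussTerm p r c (n + 1)
  have hupper : Tendsto (fun m : ℕ => 1 + c / (c + m) * M) atTop (𝓝 1) := by
    simpa using ((tendsto_const_nhds.div_atTop (tendsto_atTop_add_const_left _ c
      tendsto_natCast_atTop_atTop)).mul_const M).const_add 1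
  refine tendsto_of_tendsto_of_tendsto_of_le_of_le tendsto_const_nhds hupper (fun m => ?_)
    fun m => ?_
  · rw [htsum]
    exact le_add_of_nonneg_right <| tsum_nonneg fun n =>
      gaussTerm_nonneg hq (hc.trans_le (hcm m)) _
  · rw [htsum, ← tsum_mul_left]
    exact add_le_add_right ((hsum m).tsum_le_tsum (gaussTerm_succ_le_div_mul hq hc (hcm m))
      (((summable_nat_add_iff 1).2 (summable_gaussTerm hq hc hcp)).mul_left _)) 1

theorem tsum_succ_mul_gaussTerm_le (hq : ∀ k : ℕ, 0 ≤ (k : ℝ) ^ 2 + p * k + r) (hc : 0 < c)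
    (hcp : p + 1 < c) :
    ∑' n : ℕ, ((n : ℝ) + 1) * gaussTerm p r c n ≤
      (c - p - 1 + r) / (c - p - 1) * ∑' n, gaussTerm p r c n := by
  have hδ : 0 < c - p - 1 := by linarith
  have hsum := summable_gaussTerm hq hc hcp
  have hmul := summable_natCast_mul_gaussTerm hq hc hcp
  set w : ℕ → ℝ := fun n => n * (c + n - 1) * gaussTerm p r c n
  have hw_succ (n : ℕ) : w (n + 1) = gaussTerm p r c n * ((n : ℝ) ^ 2 + p * n + r) := by
    simp only [w]; push_cast; linear_combination gaussTerm_succ_mul (p := p) (r := r) hc n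
  have hw_nonneg (n : ℕ) : 0 ≤ w n := by
    cases n with
    | zero => simp [w]
    | succ n => rw [hw_succ]; exact mul_nonneg (gaussTerm_nonneg hq hc n) (hq n)
  have hpartial (N : ℕ) : ∑ n ∈ range N, (n : ℝ) * gaussTerm p r c n ≤
      r / (c - p - 1) * ∑' n, gaussTerm p r c n := by
    have htel : (c - p - 1) * ∑ n ∈ range N, (n : ℝ) * gaussTerm p r c n =
        r * ∑ n ∈ range N, gaussTerm p r c n - w N := by
      induction N with
      | zero => simp [w]
      | succ N ih =>
        rw [sum_range_succ, sum_range_succ, hw_succ]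
        simp only [w] at ih
        linear_combination ih
    rw [div_mul_eq_mul_div, le_div_iff₀ hδ, mul_comm, htel]
    have := hsum.sum_le_tsum (range N) fun n _ => gaussTerm_nonneg hq hc n
    have hr : 0 ≤ r := by simpa using hq 0
    linarith [hw_nonneg N, mul_le_mul_of_nonneg_left this hr]
  calc ∑' n : ℕ, ((n : ℝ) + 1) * gaussTerm p r c n
      = ∑' n : ℕ, (n : ℝ) * gaussTerm p r c n + ∑' n, gaussTerm p r c n := by
        rw [← hmul.tsum_add hsum]; exact tsum_congr fun n => by ring
    _ ≤ r / (c - p - 1) * ∑' n, gaussTerm p r c n + ∑' n, gaussTerm p r c n := by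
        gcongr; exact hmul.tsum_le_of_sum_range_le hpartial
    _ = _ := by field_simp; ring

end GaussTerm

theorem Complex.add_natCast_ne_zero_of_re_pos {s : ℂ} (hs : 0 < s.re) (k : ℕ) : s + k ≠ 0 := by
  intro h
  have := congrArg re h
  simp only [add_re, natCast_re, zero_re] at this
  linarith [k.cast_nonneg (α := ℝ)]

/-- The exponents in `GammaSeq s m = m ^ s m! / ∏_{k ≤ m} (s + k)` cancel when `u + v = w + x`. -/
theorem Complex.tendsto_prod_div_Gamma {u v w x : ℂ} (h : u + v = w + x)
    (hu : ∀ k : ℕ, u + k ≠ 0) (hv : ∀ k : ℕ, v + k ≠ 0) (hw : ∀ k : ℕ, w + k ≠ 0)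
    (hx : ∀ k : ℕ, x + k ≠ 0) :
    Tendsto (fun m : ℕ => ∏ k ∈ range m, (w + k) * (x + k) / ((u + k) * (v + k))) atTop
      (𝓝 (Gamma u * Gamma v / (Gamma w * Gamma x))) := by
  have hΓ {s : ℂ} (hs : ∀ k : ℕ, s + k ≠ 0) : Gamma s ≠ 0 :=
    Gamma_ne_zero fun m hm => hs m (by rw [hm]; ring)
  have hP {s : ℂ} (hs : ∀ k : ℕ, s + k ≠ 0) (m : ℕ) : ∏ k ∈ range m, (s + k) ≠ 0 :=
    prod_ne_zero_iff.2 fun k _ => hs k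
  rw [← tendsto_add_atTop_iff_nat 1]
  refine (((GammaSeq_tendsto_Gamma u).mul (GammaSeq_tendsto_Gamma v)).div
    ((GammaSeq_tendsto_Gamma w).mul (GammaSeq_tendsto_Gamma x))
    (mul_ne_zero (hΓ hw) (hΓ hx))).congr' ?_
  filter_upwards [eventually_ne_atTop 0] with m hm
  have hm : (m : ℂ) ≠ 0 := Nat.cast_ne_zero.2 hm
  have hcpow : (m : ℂ) ^ u * (m : ℂ) ^ v = (m : ℂ) ^ w * (m : ℂ) ^ x := by
    rw [← cpow_add _ _ hm, ← cpow_add _ _ hm, h]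
  have hpow (s : ℂ) : (m : ℂ) ^ s ≠ 0 := fun h0 => hm ((cpow_eq_zero_iff _ _).1 h0).1
  have := hpow w; have := hpow x
  simp only [Pi.div_apply, GammaSeq, prod_div_distrib, prod_mul_distrib]
  have := hP hu (m + 1); have := hP hv (m + 1); have := hP hw (m + 1); have := hP hx (m + 1)
  field_simp
  rw [mul_right_comm, mul_div_cancel_right₀ _ (Nat.cast_ne_zero.2 m.factorial_ne_zero), hcpow]

/-- Gauss's summation theorem `F(a, b; c; 1) = Γ(c) Γ(c - a - b) / (Γ(c - a) Γ(c - b))`. -/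
theorem ofReal_tsum_gaussTerm {a b : ℂ} {p r c : ℝ} (hp : a + b = p) (hr : a * b = r)
    (hq : ∀ k : ℕ, 0 ≤ (k : ℝ) ^ 2 + p * k + r) (hc : 0 < c) (hcp : p + 1 < c)
    (ha : a.re < c) (hb : b.re < c) :
    ((∑' n, gaussTerm p r c n : ℝ) : ℂ) =
      Gamma c * Gamma (c - p) / (Gamma (c - a) * Gamma (c - b)) := by
  have hre {s : ℂ} (hs : 0 < s.re) := add_natCast_ne_zero_of_re_pos hs
  have hΓ := tendsto_prod_div_Gamma (u := c) (v := c - p) (w := c - a) (x := c - b)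
    (by linear_combination hp) (hre (by simpa using hc)) (hre (by simp; linarith))
    (hre (by simpa using ha)) (hre (by simpa using hb))
  have hF := (continuous_ofReal.tendsto 1).comp (tendsto_tsum_gaussTerm_add_nat hq hc hcp)
  rw [Function.comp_def, ofReal_one] at hF
  refine tendsto_nhds_unique (tendsto_const_nhds.congr fun m => ?_) (mul_one (_ : ℂ) ▸ hΓ.mul hF)
  rw [tsum_gaussTerm_eq_prod_mul hq hc hcp m, ofReal_mul, ofReal_prod]
  congr 1
  refine prod_congr rfl fun k _ => ?_
  push_cast
  congr 1
  · linear_combination (c + k : ℂ) * hp - hr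
  · ring

theorem Complex.re_one_add_div_one_sub_pos {u v : ℂ} (h : ‖u‖ ^ 2 + ‖v‖ ^ 2 < 1) :
    0 < ((1 + u) / (1 - v)).re := by
  rw [Complex.sq_norm, Complex.sq_norm, normSq_apply, normSq_apply] at h
  have hv : 1 - v ≠ 0 := fun h0 => by
    rw [← eq_of_sub_eq_zero h0] at h; simp at h; nlinarith
  rw [div_re, ← add_div]
  refine div_pos ?_ (normSq_pos.2 hv)
  simp only [add_re, one_re, sub_re, add_im, one_im, sub_im]
  nlinarith [sq_nonneg (u.im - v.im), sq_nonneg (1 + u.re - v.re)]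

theorem re_add_conj_div_sub_pos {w G D : ℂ} (hw : w ≠ 0) (hG : ‖G‖ ≤ ‖w‖ / 2)
    (hD : ‖D‖ ≤ 1 / 2) : 0 < ((w + conj G) / (w - conj w * conj D)).re := by
  have hw' : 0 < ‖w‖ := norm_pos_iff.2 hw
  rw [show w + conj G = w * (1 + conj G / w) by field_simp,
    show w - conj w * conj D = w * (1 - conj w * conj D / w) by field_simp,
    mul_div_mul_left _ _ hw]
  apply re_one_add_div_one_sub_pos
  have hu : ‖conj G / w‖ ≤ 1 / 2 := by
    rw [norm_div, RCLike.norm_conj, div_le_iff₀ hw']; linarith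
  have hv : ‖conj w * conj D / w‖ ≤ 1 / 2 := by
    rwa [norm_div, norm_mul, RCLike.norm_conj, RCLike.norm_conj, mul_div_cancel_left₀ _ hw'.ne']
  nlinarith [norm_nonneg (conj G / w), norm_nonneg (conj w * conj D / w)]

theorem uniformlyStarlikeOnDisk_id_of_norm_deriv_le {g : ℂ → ℂ} (hg0 : g 0 = 0)
    (hg : DifferentiableOn ℂ g (ball 0 1)) (hg' : ∀ z ∈ ball (0 : ℂ) 1, ‖deriv g z‖ ≤ 1 / 2) :
    UniformlyStarlikeOnDisk (fun z => z) g := by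
  have hlip (z) (hz : z ∈ ball (0 : ℂ) 1) (ζ) (hζ : ζ ∈ ball (0 : ℂ) 1) :
      ‖g z - g ζ‖ ≤ ‖z - ζ‖ / 2 := by
    have := (convex_ball (0 : ℂ) 1).norm_image_sub_le_of_norm_deriv_le
      (fun x hx => hg.differentiableAt (isOpen_ball.mem_nhds hx)) hg' hζ hz
    linarith
  have hkey (z) (hz : z ∈ ball (0 : ℂ) 1) (ζ) (hζ : ζ ∈ ball (0 : ℂ) 1) (hne : z ≠ ζ) :
      0 < ((z + conj (g z) - (ζ + conj (g ζ))) /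
        ((z - ζ) * deriv (fun z => z) z - conj (z - ζ) * conj (deriv g z))).re := by
    have := re_add_conj_div_sub_pos (sub_ne_zero.2 hne) (hlip z hz ζ hζ) (hg' z hz)
    rwa [deriv_id'', mul_one, show z + conj (g z) - (ζ + conj (g ζ)) = z - ζ + conj (g z - g ζ) by
      rw [map_sub]; ring]
  refine ⟨by simp [hg0], fun z hz => ?_, fun z hz ζ hζ hne => (hkey z hz ζ hζ hne).le,
    fun z hz hne => ?_⟩
  · simpa using (hg' z hz).trans_lt (by norm_num)
  · simpa [hg0] using hkey z hz 0 (mem_ball_self one_pos) hne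

theorem norm_mul_succ_mul_pow_le (β : ℂ) {z : ℂ} (hz : ‖z‖ ≤ 1) (n : ℕ) :
    ‖β * ((n + 1) * z ^ n)‖ ≤ (n + 1) * ‖β‖ := by
  have : ‖(n : ℂ) + 1‖ = n + 1 := by exact_mod_cast Complex.norm_natCast (n + 1)
  rw [norm_mul, norm_mul, norm_pow, this, mul_comm _ ‖β‖]
  exact mul_le_mul_of_nonneg_left
    (mul_le_of_le_one_right (by positivity) (pow_le_one₀ (norm_nonneg z) hz)) (norm_nonneg β)

theorem hasDerivAt_tsum_mul_pow_succ {β : ℕ → ℂ}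
    (hβ : Summable fun n : ℕ => ((n : ℝ) + 1) * ‖β n‖) {z : ℂ} (hz : z ∈ ball (0 : ℂ) 1) :
    HasDerivAt (fun z => ∑' n, β n * z ^ (n + 1)) (∑' n, β n * ((n + 1) * z ^ n)) z :=
  hasDerivAt_tsum_of_isPreconnected (g' := fun n y => β n * ((n + 1) * y ^ n)) hβ isOpen_ball
    (convex_ball 0 1).isPreconnected
    (fun n y _ => by simpa using (hasDerivAt_pow (n + 1) y).const_mul (β n))
    (fun n y hy => norm_mul_succ_mul_pow_le (β n) (mem_ball_zero_iff.1 hy).le n)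
    (mem_ball_self one_pos) (by simp) hz

theorem uniformlyStarlikeOnDisk_of_tsum_le {β : ℕ → ℂ}
    (hβ : Summable fun n : ℕ => ((n : ℝ) + 1) * ‖β n‖)
    (h : ∑' n : ℕ, ((n : ℝ) + 1) * ‖β n‖ ≤ 1 / 2) :
    UniformlyStarlikeOnDisk (fun z => z) (fun z => ∑' n, β n * z ^ (n + 1)) := by
  refine uniformlyStarlikeOnDisk_id_of_norm_deriv_le (by simp)
    (fun z hz => (hasDerivAt_tsum_mul_pow_succ hβ hz).differentiableAt.differentiableWithinAt)
    fun z hz => ?_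
  have hle (n : ℕ) := norm_mul_succ_mul_pow_le (β n) (mem_ball_zero_iff.1 hz).le n
  rw [(hasDerivAt_tsum_mul_pow_succ hβ hz).deriv]
  calc _ ≤ ∑' n, ‖β n * ((n + 1) * z ^ n)‖ :=
        norm_tsum_le_tsum_norm (hβ.of_nonneg_of_le (fun _ => norm_nonneg _) fun n => hle n)
    _ ≤ ∑' n : ℕ, ((n : ℝ) + 1) * ‖β n‖ :=
        (hβ.of_nonneg_of_le (fun _ => norm_nonneg _) fun n => hle n).tsum_le_tsum
          (fun n => hle n) hβ
    _ ≤ 1 / 2 := h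

theorem poch_eq_prod (x : ℂ) (n : ℕ) : poch x n = ∏ k ∈ range n, (x + k) := by
  induction n with
  | zero => simp [poch]
  | succ n ih => rw [prod_range_succ, ← ih]; exact ascPochhammer_succ_eval n x

theorem mul_hypF_eq_tsum_bc1 (a b c α z : ℂ) :
    α / 2 * z * hypF a b c z = ∑' n, bc1 a b c α n * z ^ (n + 1) := by
  rw [hypF, ← tsum_mul_left]
  exact tsum_congr fun n => by rw [bc1]; ring

theorem bc1_eq_gaussTerm {a b : ℂ} {p r : ℝ} (hp : a + b = p) (hr : a * b = r) (c : ℝ) (α : ℂ)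
    (n : ℕ) : bc1 a b c α n = α / 2 * gaussTerm p r c n := by
  rw [bc1, mul_div_assoc, gaussTerm, poch_eq_prod, poch_eq_prod, poch_eq_prod,
    ← prod_range_add_one_eq_factorial, ← prod_mul_distrib, Nat.cast_prod, ← prod_mul_distrib,
    ← prod_div_distrib, ofReal_prod]
  congr 1
  refine prod_congr rfl fun k _ => ?_
  push_cast
  congr 1
  linear_combination (k : ℂ) * hp + hr

theorem Gamma_mul_eq_gaussTerm {a b : ℂ} {p r c : ℝ} (hp : a + b = p) (hr : a * b = r)
    (hq : ∀ k : ℕ, 0 ≤ (k : ℝ) ^ 2 + p * k + r) (hc : 0 < c) (hcp : p + 1 < c)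
    (ha : a.re < c) (hb : b.re < c) :
    Gamma c * Gamma (c - a - b - 1) / (Gamma (c - a) * Gamma (c - b)) * (a * b + c - a - b - 1) =
      (((c - p - 1 + r) / (c - p - 1) * ∑' n, gaussTerm p r c n : ℝ) : ℂ) := by
  have hδ : ((c - p - 1 : ℝ) : ℂ) ≠ 0 := ofReal_ne_zero.2 (by linarith)
  have hδ' : (c : ℂ) - a - b - 1 = (c - p - 1 : ℝ) := by push_cast; linear_combination -hp
  rw [ofReal_mul, ofReal_tsum_gaussTerm hp hr hq hc hcp ha hb, hδ',
    show (c : ℂ) - p = (c - p - 1 : ℝ) + 1 by push_cast; ring, Gamma_add_one _ hδ,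
    show a * b + c - a - b - 1 = ((c - p - 1 : ℝ) : ℂ) + r by push_cast; linear_combination hr - hp]
  have hΓa : Gamma (c - a) ≠ 0 := Gamma_ne_zero_of_re_pos (by simpa using ha)
  have hΓb : Gamma (c - b) ≠ 0 := Gamma_ne_zero_of_re_pos (by simpa using hb)
  push_cast at hδ ⊢
  field_simp

theorem exists_real_add_mul {a b : ℂ}
    (hab : (∃ a' b' : ℝ, a = (a' : ℂ) ∧ b = (b' : ℂ) ∧ -1 < a' ∧ -1 < b' ∧ 0 < a' * b') ∨
      (a ≠ 0 ∧ b ≠ 0 ∧ b = conj a))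
    {c : ℝ} (hc : 0 < c) (hc1 : (a + b).re + 1 < c) :
    ∃ p r : ℝ, a + b = p ∧ a * b = r ∧ (∀ k : ℕ, 0 ≤ (k : ℝ) ^ 2 + p * k + r) ∧
      a.re < c ∧ b.re < c := by
  rcases hab with ⟨a, b, rfl, rfl, ha, hb, hab⟩ | ⟨-, -, rfl⟩
  · simp only [← ofReal_add, ofReal_re] at hc1 ⊢
    refine ⟨a + b, a * b, rfl, by push_cast; ring, fun k => ?_, by linarith, by linarith⟩
    -- `(k + a)(k + b) ≥ 0`: both factors are positive once `k ≥ 1`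
    rcases k.eq_zero_or_pos with rfl | hk
    · simpa using hab.le
    · have hk : (1 : ℝ) ≤ k := by exact_mod_cast hk
      nlinarith [mul_pos (show 0 < k + a by linarith) (show 0 < k + b by linarith)]
  · rw [add_conj, ofReal_re] at hc1
    have hre : a.re < c := by cases le_or_gt a.re 0 <;> linarith
    refine ⟨2 * a.re, normSq a, by rw [add_conj], by rw [mul_conj], fun k => ?_, hre,
      by rwa [conj_re]⟩
    -- `k² + 2 k Re a + |a|² = |k + a|²`
    rw [normSq_apply]
    nlinarith [sq_nonneg ((k : ℝ) + a.re), sq_nonneg a.im]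

theorem hypergeom_uniformly_starlike_a_general (a b : ℂ)
    (hab : (∃ a' b' : ℝ, a = (a' : ℂ) ∧ b = (b' : ℂ) ∧ -1 < a' ∧ -1 < b' ∧ 0 < a' * b') ∨
           (a ≠ 0 ∧ b ≠ 0 ∧ b = conj a))
    (c : ℝ) (hc : 0 < c) (hc1 : (a + b).re + 1 < c)
    (α : ℂ)
    (hQ : ∃ q : ℝ, 0 < q ∧ q ≤ 1 ∧
      (q : ℂ) = (‖α‖ : ℂ) * (Complex.Gamma (c : ℂ) * Complex.Gamma ((c : ℂ) - a - b - 1)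
          / (Complex.Gamma ((c : ℂ) - a) * Complex.Gamma ((c : ℂ) - b)))
        * (a * b + (c : ℂ) - a - b - 1)) :
    (Summable fun n : ℕ => ((n + 1 : ℝ)) * ‖bc1 a b (c : ℂ) α n‖) ∧
    (∑' n : ℕ, ((n + 1 : ℝ)) * ‖bc1 a b (c : ℂ) α n‖) ≤ 1 / 2 ∧
    UniformlyStarlikeOnDisk (fun z => z) (fun z => α / 2 * z * hypF a b (c : ℂ) z) := by
  obtain ⟨p, r, hp, hr, hq, ha, hb⟩ := exists_real_add_mul hab hc hc1
  have hcp : p + 1 < c := by rwa [hp, ofReal_re] at hc1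
  obtain ⟨q, -, hq1, hqe⟩ := hQ
  rw [mul_assoc, Gamma_mul_eq_gaussTerm hp hr hq hc hcp ha hb, ← ofReal_mul, ofReal_inj] at hqe
  have hnorm (n : ℕ) : ((n : ℝ) + 1) * ‖bc1 a b c α n‖ =
      ‖α‖ / 2 * (((n : ℝ) + 1) * gaussTerm p r c n) := by
    rw [bc1_eq_gaussTerm hp hr, norm_mul, norm_div, norm_real, RCLike.norm_ofNat,
      Real.norm_of_nonneg (gaussTerm_nonneg hq hc n)]
    ring
  have hsum : Summable fun n : ℕ => ((n : ℝ) + 1) * ‖bc1 a b c α n‖ := by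
    simpa only [hnorm] using (summable_succ_mul_gaussTerm hq hc hcp).mul_left (‖α‖ / 2)
  have hbound : ∑' n : ℕ, ((n : ℝ) + 1) * ‖bc1 a b c α n‖ ≤ 1 / 2 := by
    calc ∑' n : ℕ, ((n : ℝ) + 1) * ‖bc1 a b c α n‖
        = ‖α‖ / 2 * ∑' n : ℕ, ((n : ℝ) + 1) * gaussTerm p r c n := by
          simp only [hnorm, tsum_mul_left]
      _ ≤ ‖α‖ / 2 * ((c - p - 1 + r) / (c - p - 1) * ∑' n, gaussTerm p r c n) := by
          gcongr; exact tsum_succ_mul_gaussTerm_le hq hc hcp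
      _ = q / 2 := by rw [hqe]; ring
      _ ≤ 1 / 2 := by linarith
  refine ⟨hsum, hbound, ?_⟩
  simpa only [mul_hypF_eq_tsum_bc1] using uniformlyStarlikeOnDisk_of_tsum_le hsum hbound

/-- Theorem 5(a): under the stated conditions on `a, b, c, α`, the
coefficients of `g₁(z) = (α/2) z F(a,b;c;z)` satisfy `∑_{n≥1} n|bₙ| ≤ 1/2`;
consequently `f₁(z) = z + conj(g₁(z))` is uniformly starlike in `𝔻`. -/
theorem hypergeom_uniformly_starlike_a (a b : ℂ)
    (hab : (∃ a' b' : ℝ, a = (a' : ℂ) ∧ b = (b' : ℂ) ∧ -1 < a' ∧ -1 < b' ∧ 0 < a' * b') ∨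
           (a ≠ 0 ∧ b ≠ 0 ∧ b = conj a))
    (c : ℝ) (hc : 0 < c) (hc1 : (a + b).re + 1 < c)
    (α : ℂ) (hα : ‖α‖ < 1)
    (hQ : ∃ q : ℝ, 0 < q ∧ q ≤ 1 ∧
      (q : ℂ) = (‖α‖ : ℂ) * (Complex.Gamma (c : ℂ) * Complex.Gamma ((c : ℂ) - a - b - 1)
          / (Complex.Gamma ((c : ℂ) - a) * Complex.Gamma ((c : ℂ) - b)))
        * (a * b + (c : ℂ) - a - b - 1)) :
    (Summable fun n : ℕ => ((n + 1 : ℝ)) * ‖bc1 a b (c : ℂ) α n‖) ∧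
    (∑' n : ℕ, ((n + 1 : ℝ)) * ‖bc1 a b (c : ℂ) α n‖) ≤ 1 / 2 ∧
    UniformlyStarlikeOnDisk (fun z => z) (fun z => α / 2 * z * hypF a b (c : ℂ) z) :=
  hypergeom_uniformly_starlike_a_general a b hab c hc hc1 α hQ
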